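/- Completeness of DmbCcl with respect to swap Kripke models: for every set of formulas Γ ∪ {φ} ⊆ For(Σ), if Γ ⊨_DmbCcl φ then Γ ⊢_DmbCcl φ. -/

import Mathlib

/-- Formulas over the signature Σ = {∧, ∨, →, ¬, ∘, O}, with countably many
propositional variables. -/
inductive Form : Type
  | var : ℕ → Form
  | and : Form → Form → Form
  | or : Form → Form → Form
  | imp : Form → Form → Form
  | neg : Form → Form
  | circ : Form → Form
  | obl : Form → Form

namespace Form
/-- ⊥_α := (α ∧ ¬α) ∧ ∘α -/
def bot (α : Form) : Form := (α.and α.neg).and α.circ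
end Form

/-- Theorems of DmbCcl: the DmbC axioms (CPL⁺, (EM), (bc), (O-K), (O-E)) plus the
da Costa axiom (cl) ¬(α ∧ ¬α) → ∘α, with Modus Ponens and O-necessitation. -/
inductive ThmDmbCcl : Form → Prop
  | A1 (α β : Form) : ThmDmbCcl (α.imp (β.imp α))
  | A2 (α β γ : Form) : ThmDmbCcl ((α.imp (β.imp γ)).imp ((α.imp β).imp (α.imp γ)))
  | A3 (α β : Form) : ThmDmbCcl (α.imp (β.imp (α.and β)))
  | A4 (α β : Form) : ThmDmbCcl ((α.and β).imp α)
  | A5 (α β : Form) : ThmDmbCcl ((α.and β).imp β)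
  | A6 (α β : Form) : ThmDmbCcl (α.imp (α.or β))
  | A7 (α β : Form) : ThmDmbCcl (β.imp (α.or β))
  | A8 (α β γ : Form) : ThmDmbCcl ((α.imp γ).imp ((β.imp γ).imp ((α.or β).imp γ)))
  | A9 (α β : Form) : ThmDmbCcl (((α.imp β).imp α).imp α)
  | EM (α : Form) : ThmDmbCcl (α.or α.neg)
  | bc (α β : Form) : ThmDmbCcl (α.circ.imp (α.imp (α.neg.imp β)))
  | cl (α : Form) : ThmDmbCcl ((α.and α.neg).neg.imp α.circ)
  | OK (α β : Form) : ThmDmbCcl ((α.imp β).obl.imp (α.obl.imp β.obl))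
  | OE (α : Form) : ThmDmbCcl (α.bot.obl.imp α.bot)
  | mp {α β : Form} : ThmDmbCcl (α.imp β) → ThmDmbCcl α → ThmDmbCcl β
  | nec {α : Form} : ThmDmbCcl α → ThmDmbCcl α.obl

/-- conj γ [γ₂,…,γ_k] = γ ∧ γ₂ ∧ … ∧ γ_k -/
def conj (γ : Form) : List Form → Form
  | [] => γ
  | δ :: l => γ.and (conj δ l)

/-- Γ ⊢_DmbCcl φ iff ⊢ φ or ⊢ (γ₁ ∧ … ∧ γ_k) → φ for some γ₁,…,γ_k ∈ Γ, k ≥ 1. -/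
def DerivDmbCcl (Γ : Set Form) (φ : Form) : Prop :=
  ThmDmbCcl φ ∨ ∃ (γ : Form) (l : List Form),
    (∀ δ ∈ γ :: l, δ ∈ Γ) ∧ ThmDmbCcl ((conj γ l).imp φ)

/-- The three snapshots T = (1,0), t = (1,1), F = (0,1). -/
inductive SV : Type
  | T | t | F
deriving DecidableEq

/-- First coordinate of a snapshot. -/
def SV.p1 : SV → Bool
  | .T => true | .t => true | .F => false

/-- Second coordinate of a snapshot. -/
def SV.p2 : SV → Bool
  | .T => false | .t => true | .F => true

/-- Designated values: D = {T, t}, i.e. first coordinate is 1. -/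
def SV.desig (a : SV) : Prop := a.p1 = true

/-- Swap Kripke model conditions for DmbCcl on a serial frame (W,R):
the DmbCciw conditions (with ∘ interpreted by ∘̃₁) plus the restriction
that v_w(α) = t implies v_w(α ∧ ¬α) = T. -/
structure IsModelDmbCcl {W : Type} (R : W → W → Prop) (v : W → Form → SV) : Prop where
  serial : ∀ w, ∃ w', R w w'
  and_ : ∀ w α β, (v w (α.and β)).p1 = ((v w α).p1 && (v w β).p1)
  or_ : ∀ w α β, (v w (α.or β)).p1 = ((v w α).p1 || (v w β).p1)
  imp_ : ∀ w α β, (v w (α.imp β)).p1 = (!(v w α).p1 || (v w β).p1)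
  neg_ : ∀ w α, (v w α.neg).p1 = (v w α).p2
  circ_ : ∀ w α, (v w α.circ).p1 = !((v w α).p1 && (v w α).p2)
  obl_ : ∀ w α, ((v w α.obl).p1 = true ↔ ∀ w', R w w' → (v w' α).p1 = true)
  cl_ : ∀ w α, v w α = SV.t → v w (α.and α.neg) = SV.T

/-- Γ ⊨_DmbCcl φ : semantic consequence over all swap Kripke models for DmbCcl. -/
def SemDmbCcl (Γ : Set Form) (φ : Form) : Prop :=
  ∀ (W : Type) (R : W → W → Prop) (v : W → Form → SV), Nonempty W →
    IsModelDmbCcl R v → ∀ w : W, (∀ γ ∈ Γ, (v w γ).desig) → (v w φ).desig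

/-!
A canonical model refutes every underivable consequence. Its worlds are the theories that are
maximal among those not deriving some fixed formula; such a theory is closed under derivation,
prime, and by (EM) contains α or ¬α for every α. The valuation sends α to the snapshot
(α ∈ Δ, ¬α ∈ Δ), so that α is designated at Δ exactly when α ∈ Δ, and Δ sees Δ' when
{α | Oα ∈ Δ} ⊆ Δ'. The positive axioms (with Peirce's law for →) give the clauses for ∧, ∨, →;
(bc) and (cl) give the clause for ∘ and the restriction of DmbCcl. Because (O-K) and necessitation
make {α | Oα ∈ Δ} closed under derivation, the clause for O holds, and (O-E) makes that set
consistent, which is seriality.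
-/

open ThmDmbCcl

namespace ThmDmbCcl

theorem imp_intro {α β : Form} (h : ThmDmbCcl β) : ThmDmbCcl (α.imp β) :=
  mp (A1 β α) h

theorem imp_mp {α β γ : Form} (h₁ : ThmDmbCcl (α.imp (β.imp γ)))
    (h₂ : ThmDmbCcl (α.imp β)) : ThmDmbCcl (α.imp γ) :=
  mp (mp (A2 α β γ) h₁) h₂

theorem imp_self (α : Form) : ThmDmbCcl (α.imp α) :=
  imp_mp (A1 α (α.imp α)) (A1 α α)

theorem imp_trans {α β γ : Form} (h₁ : ThmDmbCcl (α.imp β)) (h₂ : ThmDmbCcl (β.imp γ)) :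
    ThmDmbCcl (α.imp γ) :=
  imp_mp (imp_intro h₂) h₁

theorem imp_and {α β γ : Form} (h₁ : ThmDmbCcl (α.imp β)) (h₂ : ThmDmbCcl (α.imp γ)) :
    ThmDmbCcl (α.imp (β.and γ)) :=
  imp_mp (imp_mp (imp_intro (A3 β γ)) h₁) h₂

end ThmDmbCcl

theorem conj_append_imp_left (γ₁ γ₂ : Form) (l₁ l₂ : List Form) :
    ThmDmbCcl ((conj γ₁ (l₁ ++ γ₂ :: l₂)).imp (conj γ₁ l₁)) := by
  induction l₁ generalizing γ₁ with
  | nil => exact A4 γ₁ (conj γ₂ l₂)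
  | cons δ l ih => exact imp_and (A4 _ _) (imp_trans (A5 _ _) (ih δ))

theorem conj_append_imp_right (γ₁ γ₂ : Form) (l₁ l₂ : List Form) :
    ThmDmbCcl ((conj γ₁ (l₁ ++ γ₂ :: l₂)).imp (conj γ₂ l₂)) := by
  induction l₁ generalizing γ₁ with
  | nil => exact A5 γ₁ (conj γ₂ l₂)
  | cons δ l ih => exact imp_trans (A5 _ _) (ih δ)

inductive Derivable (Γ : Set Form) : Form → Prop
  | ax {φ : Form} : φ ∈ Γ → Derivable Γ φ
  | thm {φ : Form} : ThmDmbCcl φ → Derivable Γ φ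
  | mp {α β : Form} : Derivable Γ (α.imp β) → Derivable Γ α → Derivable Γ β

namespace Derivable

variable {Γ Γ' : Set Form} {α β φ : Form}

theorem mono (hΓ : Γ ⊆ Γ') (h : Derivable Γ φ) : Derivable Γ' φ := by
  induction h with
  | ax h => exact ax (hΓ h)
  | thm h => exact thm h
  | mp _ _ ih₁ ih₂ => exact mp ih₁ ih₂

theorem imp_of_insert (h : Derivable (insert α Γ) β) : Derivable Γ (α.imp β) := by
  induction h with
  | @ax φ h =>
    rcases h with rfl | h
    · exact thm (imp_self φ)
    · exact mp (thm (A1 φ α)) (ax h)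
  | thm h => exact thm (imp_intro h)
  | @mp β γ _ _ ih₁ ih₂ => exact mp (mp (thm (A2 α β γ)) ih₁) ih₂

theorem thmDmbCcl (h : Derivable ∅ φ) : ThmDmbCcl φ := by
  induction h with
  | ax h => exact absurd h (Set.notMem_empty _)
  | thm h => exact h
  | mp _ _ ih₁ ih₂ => exact ThmDmbCcl.mp ih₁ ih₂

theorem exists_finite (h : Derivable Γ φ) :
    ∃ s ⊆ Γ, s.Finite ∧ Derivable s φ := by
  induction h with
  | @ax φ h => exact ⟨{φ}, by simpa using h, Set.finite_singleton φ, ax rfl⟩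
  | thm h => exact ⟨∅, Set.empty_subset Γ, Set.finite_empty, thm h⟩
  | mp _ _ ih₁ ih₂ =>
    obtain ⟨s₁, hs₁Γ, hs₁, h₁⟩ := ih₁
    obtain ⟨s₂, hs₂Γ, hs₂, h₂⟩ := ih₂
    exact ⟨s₁ ∪ s₂, Set.union_subset hs₁Γ hs₂Γ, hs₁.union hs₂,
      mp (h₁.mono Set.subset_union_left) (h₂.mono Set.subset_union_right)⟩

theorem thmDmbCcl_imp_of_singleton (h : Derivable {α} β) : ThmDmbCcl (α.imp β) :=
  (imp_of_insert (h.mono (Set.singleton_subset_iff.2 (Set.mem_insert α ∅)))).thmDmbCcl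

theorem derivDmbCcl (h : Derivable Γ φ) : DerivDmbCcl Γ φ := by
  induction h with
  | @ax φ h => exact Or.inr ⟨φ, [], by simpa using h, imp_self φ⟩
  | thm h => exact Or.inl h
  | mp _ _ ih₁ ih₂ =>
    rcases ih₁ with h₁ | ⟨γ₁, l₁, hm₁, h₁⟩ <;> rcases ih₂ with h₂ | ⟨γ₂, l₂, hm₂, h₂⟩
    · exact Or.inl (ThmDmbCcl.mp h₁ h₂)
    · exact Or.inr ⟨γ₂, l₂, hm₂, imp_trans h₂ h₁⟩
    · exact Or.inr ⟨γ₁, l₁, hm₁, imp_mp h₁ (imp_intro h₂)⟩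
    · refine Or.inr ⟨γ₁, l₁ ++ γ₂ :: l₂, fun δ hδ => ?_, ?_⟩
      · rw [List.mem_cons, List.mem_append] at hδ
        rcases hδ with rfl | hδ | hδ
        · exact hm₁ δ List.mem_cons_self
        · exact hm₁ δ (List.mem_cons_of_mem γ₁ hδ)
        · exact hm₂ δ hδ
      · exact imp_mp (imp_trans (conj_append_imp_left γ₁ γ₂ l₁ l₂) h₁)
          (imp_trans (conj_append_imp_right γ₁ γ₂ l₁ l₂) h₂)

theorem obl_of_obl_preimage (h : Derivable {α | α.obl ∈ Γ} φ) : Derivable Γ φ.obl := by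
  induction h with
  | ax h => exact ax h
  | thm h => exact thm (nec h)
  | mp _ _ ih₁ ih₂ => exact mp (mp (thm (OK _ _)) ih₁) ih₂

end Derivable

namespace ThmDmbCcl

theorem or_imp (α β : Form) : ThmDmbCcl (α.or (α.imp β)) := by
  set D := α.or (α.imp β)
  have hα : Derivable {D.imp α} α := by
    have hD : Derivable {D.imp α} ((α.imp β).imp D) := .thm (A7 α (α.imp β))
    have hα : Derivable {D.imp α} ((α.imp β).imp α) :=
      .mp (.mp (.thm (A2 (α.imp β) D α)) (.mp (.thm (A1 (D.imp α) (α.imp β))) (.ax rfl))) hD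
    exact .mp (.thm (A9 α β)) hα
  have hD : Derivable {D.imp α} D := .mp (.thm (A6 α (α.imp β))) hα
  exact mp (A9 D α) hD.thmDmbCcl_imp_of_singleton

theorem bot_imp (α β : Form) : ThmDmbCcl (α.bot.imp β) := by
  have hbot : Derivable {α.bot} α.bot := .ax rfl
  have hcontra : Derivable {α.bot} (α.and α.neg) := .mp (.thm (A4 _ _)) hbot
  have hβ : Derivable {α.bot} β :=
    .mp (.mp (.mp (.thm (bc α β)) (.mp (.thm (A5 _ _)) hbot))
      (.mp (.thm (A4 _ _)) hcontra)) (.mp (.thm (A5 _ _)) hcontra)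
  exact hβ.thmDmbCcl_imp_of_singleton

end ThmDmbCcl

structure World where
  carrier : Set Form
  target : Form
  not_derivable : ¬ Derivable carrier target
  derivable_insert : ∀ β, β ∉ carrier → Derivable (insert β carrier) target

namespace World

variable (Δ : World) {α β : Form}

theorem mem_of_derivable (h : Derivable Δ.carrier β) : β ∈ Δ.carrier := by
  by_contra hβ
  exact Δ.not_derivable (.mp (Derivable.imp_of_insert (Δ.derivable_insert β hβ)) h)

theorem thm_mem (h : ThmDmbCcl β) : β ∈ Δ.carrier :=
  Δ.mem_of_derivable (.thm h)

theorem mem_of_imp_mem (h : α.imp β ∈ Δ.carrier) (hα : α ∈ Δ.carrier) : β ∈ Δ.carrier :=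
  Δ.mem_of_derivable (.mp (.ax h) (.ax hα))

theorem and_mem_iff : α.and β ∈ Δ.carrier ↔ α ∈ Δ.carrier ∧ β ∈ Δ.carrier :=
  ⟨fun h => ⟨Δ.mem_of_imp_mem (Δ.thm_mem (A4 α β)) h, Δ.mem_of_imp_mem (Δ.thm_mem (A5 α β)) h⟩,
    fun ⟨hα, hβ⟩ => Δ.mem_of_imp_mem (Δ.mem_of_imp_mem (Δ.thm_mem (A3 α β)) hα) hβ⟩

theorem or_mem_iff : α.or β ∈ Δ.carrier ↔ α ∈ Δ.carrier ∨ β ∈ Δ.carrier := by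
  refine ⟨fun h => ?_, ?_⟩
  · by_contra! hαβ
    have hα := Derivable.imp_of_insert (Δ.derivable_insert α hαβ.1)
    have hβ := Derivable.imp_of_insert (Δ.derivable_insert β hαβ.2)
    exact Δ.not_derivable (.mp (.mp (.mp (.thm (A8 α β Δ.target)) hα) hβ) (.ax h))
  · rintro (h | h)
    · exact Δ.mem_of_imp_mem (Δ.thm_mem (A6 α β)) h
    · exact Δ.mem_of_imp_mem (Δ.thm_mem (A7 α β)) h

theorem imp_mem_iff : α.imp β ∈ Δ.carrier ↔ α ∉ Δ.carrier ∨ β ∈ Δ.carrier := by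
  refine ⟨fun h => or_iff_not_imp_left.2 fun hα => Δ.mem_of_imp_mem h (not_not.1 hα), ?_⟩
  rintro (h | h)
  · exact ((Δ.or_mem_iff.1 (Δ.thm_mem (or_imp α β))).resolve_left h)
  · exact Δ.mem_of_imp_mem (Δ.thm_mem (A1 β α)) h

theorem neg_mem_of_notMem (h : α ∉ Δ.carrier) : α.neg ∈ Δ.carrier :=
  (Δ.or_mem_iff.1 (Δ.thm_mem (EM α))).resolve_left h

theorem circ_notMem (hα : α ∈ Δ.carrier) (hnα : α.neg ∈ Δ.carrier) : α.circ ∉ Δ.carrier :=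
  fun h => Δ.not_derivable (.mp (.mp (.mp (.thm (bc α Δ.target)) (.ax h)) (.ax hα)) (.ax hnα))

theorem circ_mem_iff : α.circ ∈ Δ.carrier ↔ ¬(α ∈ Δ.carrier ∧ α.neg ∈ Δ.carrier) := by
  refine ⟨fun h ⟨hα, hnα⟩ => Δ.circ_notMem hα hnα h, fun h => ?_⟩
  have hcontra : α.and α.neg ∉ Δ.carrier := fun hc => h (Δ.and_mem_iff.1 hc)
  exact Δ.mem_of_imp_mem (Δ.thm_mem (cl α)) (Δ.neg_mem_of_notMem hcontra)

theorem neg_and_neg_notMem (hα : α ∈ Δ.carrier) (hnα : α.neg ∈ Δ.carrier) :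
    (α.and α.neg).neg ∉ Δ.carrier :=
  fun h => Δ.circ_notMem hα hnα (Δ.mem_of_imp_mem (Δ.thm_mem (cl α)) h)

end World

theorem exists_world_of_not_derivable {Γ : Set Form} {ψ : Form} (h : ¬ Derivable Γ ψ) :
    ∃ Δ : World, Γ ⊆ Δ.carrier ∧ Δ.target = ψ := by
  obtain ⟨Δ, hΓΔ, hΔ⟩ := zorn_subset_nonempty {X : Set Form | ¬ Derivable X ψ}
    (fun c hc hchain hne => by
      refine ⟨⋃₀ c, fun hd => ?_, fun X hX => Set.subset_sUnion_of_mem hX⟩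
      obtain ⟨s, hsc, hs, hsψ⟩ := hd.exists_finite
      obtain ⟨X, hX, hsX⟩ :=
        DirectedOn.exists_mem_subset_of_finite_of_subset_sUnion hne hchain.directedOn hs hsc
      exact hc hX (hsψ.mono hsX)) Γ h
  refine ⟨⟨Δ, ψ, hΔ.prop, fun β hβ => ?_⟩, hΓΔ, rfl⟩
  by_contra hβψ
  exact hβ (hΔ.mem_of_prop_insert hβψ)

namespace World

def Rel (Δ Δ' : World) : Prop := {α | α.obl ∈ Δ.carrier} ⊆ Δ'.carrier

theorem rel_serial (Δ : World) : ∃ Δ', Rel Δ Δ' := by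
  have hcons : ¬ Derivable {α | α.obl ∈ Δ.carrier} (Form.var 0).bot := fun h =>
    have hbot : Derivable Δ.carrier (Form.var 0).bot := .mp (.thm (OE _)) h.obl_of_obl_preimage
    Δ.not_derivable (.mp (.thm (bot_imp _ Δ.target)) hbot)
  obtain ⟨Δ', hΔ', -⟩ := exists_world_of_not_derivable hcons
  exact ⟨Δ', hΔ'⟩

theorem obl_mem_iff (Δ : World) (α : Form) :
    α.obl ∈ Δ.carrier ↔ ∀ Δ', Rel Δ Δ' → α ∈ Δ'.carrier := by
  refine ⟨fun h Δ' hΔ' => hΔ' h, fun h => ?_⟩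
  by_contra hα
  have hnd : ¬ Derivable {β | β.obl ∈ Δ.carrier} α := fun hd =>
    hα (Δ.mem_of_derivable hd.obl_of_obl_preimage)
  obtain ⟨Δ', hΔ', rfl⟩ := exists_world_of_not_derivable hnd
  exact Δ'.not_derivable (.ax (h Δ' hΔ'))

open Classical in
noncomputable def val (Δ : World) (α : Form) : SV :=
  if α ∈ Δ.carrier then (if α.neg ∈ Δ.carrier then SV.t else SV.T) else SV.F

theorem val_p1 (Δ : World) (α : Form) : (val Δ α).p1 = true ↔ α ∈ Δ.carrier := by
  unfold val
  split_ifs <;> simp_all [SV.p1]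

theorem val_p2 (Δ : World) (α : Form) : (val Δ α).p2 = true ↔ α.neg ∈ Δ.carrier := by
  unfold val
  split_ifs with hα
  · simp_all [SV.p2]
  · simp_all [SV.p2]
  · simpa [SV.p2] using Δ.neg_mem_of_notMem hα

theorem isModelDmbCcl : IsModelDmbCcl Rel val where
  serial := rel_serial
  and_ Δ α β := by
    rw [Bool.eq_iff_iff]
    simp only [Bool.and_eq_true, val_p1, and_mem_iff]
  or_ Δ α β := by
    rw [Bool.eq_iff_iff]
    simp only [Bool.or_eq_true, val_p1, or_mem_iff]
  imp_ Δ α β := by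
    rw [Bool.eq_iff_iff]
    simp only [Bool.or_eq_true, Bool.not_eq_true', ← Bool.not_eq_true, val_p1,
      imp_mem_iff]
  neg_ Δ α := by rw [Bool.eq_iff_iff, val_p1, val_p2]
  circ_ Δ α := by
    rw [Bool.eq_iff_iff]
    simp only [Bool.not_eq_true', ← Bool.not_eq_true, Bool.and_eq_true, val_p1,
      val_p2, circ_mem_iff]
  obl_ Δ α := by simp only [val_p1, obl_mem_iff]
  cl_ Δ α h := by
    have hα : α ∈ Δ.carrier := (val_p1 Δ α).1 (by rw [h]; rfl)
    have hnα : α.neg ∈ Δ.carrier := (val_p2 Δ α).1 (by rw [h]; rfl)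
    rw [val, if_pos (Δ.and_mem_iff.2 ⟨hα, hnα⟩), if_neg (Δ.neg_and_neg_notMem hα hnα)]

end World

/-- Completeness of DmbCcl w.r.t. swap Kripke models. -/
theorem DmbCcl_completeness (Γ : Set Form) (φ : Form) :
    SemDmbCcl Γ φ → DerivDmbCcl Γ φ := by
  intro hsem
  by_contra hnd
  obtain ⟨Δ, hΓΔ, rfl⟩ := exists_world_of_not_derivable fun h => hnd h.derivDmbCcl
  have hφ := hsem World World.Rel World.val ⟨Δ⟩ World.isModelDmbCcl Δ
    fun γ hγ => (World.val_p1 Δ γ).2 (hΓΔ hγ)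
  exact Δ.not_derivable (.ax ((World.val_p1 Δ _).1 hφ))
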